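/- Let Q : ℝ³ → M₄(ℂ) be measurable with |Q(x)_{jk}| ≤ C_q ⟨x⟩^{-ρ} for all x and all j,k (with C_q > 0, ρ > 1), and let f : ℝ³ → ℂ⁴ be measurable with |f(x)| ≤ C_f ⟨x⟩^{-2} for all x. Then there is a constant C > 0, depending only on C_f, C_q and ρ, such that for every R₀ ≥ 1, every r ≥ 2R₀ and every ω ∈ ℝ³ with |ω| = 1, | ∫_{|y| ≤ R₀} α·( ω − (ω − r⁻¹y)/|ω − r⁻¹y|³ ) Q(y) f(y) dy | ≤ C R₀ r⁻¹. -/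

import Mathlib

/-!
For `‖y‖ ≤ R₀ ≤ r / 2` the point `z = ω - r⁻¹ y` lies within `R₀ / r ≤ 1 / 2` of the unit vector
`ω`, and `z ↦ z / ‖z‖³` fixes `ω` and is Lipschitz on that annulus, so `α · (ω - z / ‖z‖³)` has
entries `O(R₀ / r)` uniformly in `y`. The remaining factor `Q f` is `O(⟨y⟩^(-ρ-2))`, which is
integrable over `ℝ³` because `ρ + 2 > 3`.
-/

open MeasureTheory Real Filter

noncomputable section

abbrev R3 := EuclideanSpace ℝ (Fin 3)
abbrev C4 := EuclideanSpace ℂ (Fin 4)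
abbrev C2 := EuclideanSpace ℂ (Fin 2)

/-- The Pauli matrices. -/
def pauli : Fin 3 → Matrix (Fin 2) (Fin 2) ℂ
  | 0 => !![0, 1; 1, 0]
  | 1 => !![0, -Complex.I; Complex.I, 0]
  | 2 => !![1, 0; 0, -1]

/-- The Dirac matrices `α_j`. -/
def dirac (j : Fin 3) : Matrix (Fin 4) (Fin 4) ℂ :=
  Matrix.reindex finSumFinEquiv finSumFinEquiv (Matrix.fromBlocks 0 (pauli j) (pauli j) 0)

/-- `σ · x` for `x ∈ ℝ³`. -/
def pauliDot (x : R3) : Matrix (Fin 2) (Fin 2) ℂ :=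
  ∑ j, (x j : ℂ) • pauli j

/-- `α · x` for `x ∈ ℝ³`. -/
def alphaDot (x : R3) : Matrix (Fin 4) (Fin 4) ℂ :=
  ∑ j, (x j : ℂ) • dirac j

/-- Action of a 4×4 complex matrix on `ℂ⁴` (with the Euclidean norm). -/
def mulVec4 (M : Matrix (Fin 4) (Fin 4) ℂ) (v : C4) : C4 :=
  (WithLp.equiv 2 (Fin 4 → ℂ)).symm (M.mulVec ((WithLp.equiv 2 (Fin 4 → ℂ)) v))

/-- Action of a 2×2 complex matrix on `ℂ²` (with the Euclidean norm). -/
def mulVec2 (M : Matrix (Fin 2) (Fin 2) ℂ) (v : C2) : C2 :=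
  (WithLp.equiv 2 (Fin 2 → ℂ)).symm (M.mulVec ((WithLp.equiv 2 (Fin 2 → ℂ)) v))

/-- The Japanese bracket `⟨x⟩ = √(1+|x|²)`. -/
def jb (x : R3) : ℝ := Real.sqrt (1 + ‖x‖ ^ 2)

/-- Cross product on `ℝ³`. -/
def cross3 (a b : R3) : R3 :=
  (WithLp.equiv 2 (Fin 3 → ℝ)).symm
    ![a 1 * b 2 - a 2 * b 1, a 2 * b 0 - a 0 * b 2, a 0 * b 1 - a 1 * b 0]

lemma EuclideanSpace.norm_le_sum_norm_apply {𝕜 n : Type*} [RCLike 𝕜] [Fintype n]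
    (x : EuclideanSpace 𝕜 n) : ‖x‖ ≤ ∑ i, ‖x i‖ := by
  rw [EuclideanSpace.norm_eq]
  exact (Real.sqrt_le_left (Finset.sum_nonneg fun i _ => norm_nonneg _)).mpr
    (Finset.sum_sq_le_sq_sum_of_nonneg fun i _ => norm_nonneg _)

lemma EuclideanSpace.norm_toLp_mulVec_le {𝕜 m n : Type*} [RCLike 𝕜] [Fintype m] [Fintype n]
    (M : Matrix m n 𝕜) (v : EuclideanSpace 𝕜 n) {a : ℝ} (ha : ∀ i j, ‖M i j‖ ≤ a) :
    ‖WithLp.toLp 2 (M.mulVec v.ofLp)‖ ≤ Fintype.card m * Fintype.card n * a * ‖v‖ := by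
  have hcoord (i : m) : ‖M.mulVec v.ofLp i‖ ≤ Fintype.card n * (a * ‖v‖) := by
    calc ‖∑ j, M i j * v j‖ ≤ ∑ j, ‖M i j * v j‖ := norm_sum_le _ _
      _ ≤ ∑ _j : n, a * ‖v‖ := by
        gcongr with j
        rw [norm_mul]
        exact mul_le_mul (ha i j) (PiLp.norm_apply_le v j) (norm_nonneg _)
          ((norm_nonneg _).trans (ha i j))
      _ = _ := by simp
  calc ‖WithLp.toLp 2 (M.mulVec v.ofLp)‖ ≤ ∑ i, ‖M.mulVec v.ofLp i‖ :=
        EuclideanSpace.norm_le_sum_norm_apply _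
    _ ≤ ∑ _i : m, Fintype.card n * (a * ‖v‖) := Finset.sum_le_sum fun i _ => hcoord i
    _ = _ := by simp; ring

lemma norm_mulVec4_le (M : Matrix (Fin 4) (Fin 4) ℂ) (v : C4) {a : ℝ}
    (ha : ∀ i j, ‖M i j‖ ≤ a) :
    ‖mulVec4 M v‖ ≤ 16 * a * ‖v‖ :=
  (EuclideanSpace.norm_toLp_mulVec_le M v ha).trans_eq (by norm_num)

lemma norm_dirac_apply_le (i : Fin 3) (j k : Fin 4) : ‖dirac i j k‖ ≤ 1 := by
  fin_cases i <;> fin_cases j <;> fin_cases k <;>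
    simp [dirac, pauli, Matrix.fromBlocks, finSumFinEquiv, Fin.addCases]

lemma norm_alphaDot_apply_le (v : R3) (j k : Fin 4) : ‖alphaDot v j k‖ ≤ 3 * ‖v‖ := by
  calc ‖alphaDot v j k‖ = ‖∑ i, (v i : ℂ) * dirac i j k‖ := by
        simp [alphaDot, Matrix.sum_apply]
    _ ≤ ∑ i, ‖(v i : ℂ) * dirac i j k‖ := norm_sum_le _ _
    _ ≤ ∑ _i : Fin 3, ‖v‖ := by
        gcongr with i
        rw [norm_mul, Complex.norm_real]
        exact (mul_le_of_le_one_right (norm_nonneg _) (norm_dirac_apply_le i j k)).trans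
          (PiLp.norm_apply_le v i)
    _ = 3 * ‖v‖ := by simp

lemma abs_one_sub_inv_pow_three_mul_le {t : ℝ} (ht₁ : 1 / 2 ≤ t) :
    |1 - (t ^ 3)⁻¹| * t ≤ 19 * |t - 1| := by
  have ht : 0 < t := by linarith
  have hfactor : |1 - (t ^ 3)⁻¹| * t = |t - 1| * ((t ^ 2 + t + 1) / t ^ 2) := by
    rw [show 1 - (t ^ 3)⁻¹ = (t - 1) * ((t ^ 2 + t + 1) / t ^ 3) by field_simp; ring, abs_mul,
      abs_of_pos (by positivity : 0 < (t ^ 2 + t + 1) / t ^ 3)]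
    field_simp
  have hratio : (t ^ 2 + t + 1) / t ^ 2 ≤ 19 := by
    rw [div_le_iff₀ (by positivity)]
    nlinarith
  rw [hfactor, mul_comm 19]
  exact mul_le_mul_of_nonneg_left hratio (abs_nonneg _)

lemma norm_sub_inv_norm_pow_three_smul_le {E : Type*} [NormedAddCommGroup E] [NormedSpace ℝ E]
    {ω w : E} (hω : ‖ω‖ = 1) (hw : ‖w‖ ≤ 1 / 2) :
    ‖ω - (‖ω - w‖ ^ 3)⁻¹ • (ω - w)‖ ≤ 20 * ‖w‖ := by
  set t := ‖ω - w‖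
  have hdist : |t - 1| ≤ ‖w‖ := by
    simpa [hω] using abs_norm_sub_norm_le (ω - w) ω
  have ht₁ : 1 / 2 ≤ t := by linarith [(abs_le.mp (hdist.trans hw)).1]
  calc ‖ω - (t ^ 3)⁻¹ • (ω - w)‖ = ‖w + (1 - (t ^ 3)⁻¹) • (ω - w)‖ := by
        rw [sub_smul, one_smul]; abel_nf
    _ ≤ ‖w‖ + |1 - (t ^ 3)⁻¹| * t := by
        rw [← Real.norm_eq_abs, ← norm_smul]; exact norm_add_le _ _
    _ ≤ 20 * ‖w‖ := by linarith [abs_one_sub_inv_pow_three_mul_le ht₁]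

lemma norm_sub_inv_norm_pow_three_smul_inv_smul_le {E : Type*} [NormedAddCommGroup E]
    [NormedSpace ℝ E] {ω y : E} {R₀ r : ℝ} (hω : ‖ω‖ = 1) (hy : ‖y‖ ≤ R₀) (hr : 0 < r)
    (hR₀r : 2 * R₀ ≤ r) :
    ‖ω - (‖ω - r⁻¹ • y‖ ^ 3)⁻¹ • (ω - r⁻¹ • y)‖ ≤ 20 * (R₀ * r⁻¹) := by
  have hw : ‖r⁻¹ • y‖ ≤ R₀ * r⁻¹ := by
    rw [norm_smul, norm_inv, Real.norm_of_nonneg hr.le, mul_comm]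
    gcongr
  have hsmall : R₀ * r⁻¹ ≤ 1 / 2 := by
    rw [← div_eq_mul_inv, div_le_iff₀ hr]; linarith
  exact (norm_sub_inv_norm_pow_three_smul_le hω (hw.trans hsmall)).trans (by gcongr)

lemma jb_pos (x : R3) : 0 < jb x := by
  unfold jb
  positivity

lemma jb_rpow_nonneg (x : R3) (s : ℝ) : 0 ≤ jb x ^ s :=
  Real.rpow_nonneg (jb_pos x).le s

lemma jb_zero : jb 0 = 1 := by
  simp [jb]

lemma norm_mulVec4_le_mul_jb_rpow {M : Matrix (Fin 4) (Fin 4) ℂ} {v : C4} {x : R3} {a b s t : ℝ}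
    (hM : ∀ j k, ‖M j k‖ ≤ a * jb x ^ (-s)) (hv : ‖v‖ ≤ b * jb x ^ (-t)) :
    ‖mulVec4 M v‖ ≤ 16 * a * b * jb x ^ (-(s + t)) := by
  have ha : 0 ≤ a * jb x ^ (-s) := (norm_nonneg _).trans (hM 0 0)
  calc ‖mulVec4 M v‖ ≤ 16 * (a * jb x ^ (-s)) * (b * jb x ^ (-t)) :=
        (norm_mulVec4_le M v hM).trans (by gcongr)
    _ = 16 * a * b * jb x ^ (-(s + t)) := by
        rw [neg_add, Real.rpow_add (jb_pos x)]; ring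

lemma integrable_jb_rpow_neg {s : ℝ} (hs : 3 < s) : Integrable fun x : R3 => jb x ^ (-s) := by
  refine (integrable_rpow_neg_one_add_norm_sq (by simpa [finrank_euclideanSpace] using hs)).congr
    (Eventually.of_forall fun x => ?_)
  simp only [jb, Real.sqrt_eq_rpow, ← Real.rpow_mul (by positivity : (0 : ℝ) ≤ 1 + ‖x‖ ^ 2)]
  ring_nf

lemma norm_setIntegral_le_mul_integral_jb_rpow {E : Type*} [NormedAddCommGroup E]
    [NormedSpace ℝ E] {g : R3 → E} {S : Set R3} (hS : MeasurableSet S) {s c : ℝ} (hs : 3 < s)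
    (hc : 0 ≤ c) (hg : ∀ y ∈ S, ‖g y‖ ≤ c * jb y ^ (-s)) :
    ‖∫ y in S, g y‖ ≤ c * ∫ y, jb y ^ (-s) := by
  have hint := integrable_jb_rpow_neg hs
  calc ‖∫ y in S, g y‖ ≤ ∫ y in S, c * jb y ^ (-s) :=
        norm_integral_le_of_norm_le (hint.const_mul c).restrict (ae_restrict_of_forall_mem hS hg)
    _ = c * ∫ y in S, jb y ^ (-s) := integral_const_mul c _
    _ ≤ c * ∫ y, jb y ^ (-s) := mul_le_mul_of_nonneg_left
        (setIntegral_le_integral hint (Eventually.of_forall fun y => jb_rpow_nonneg y _)) hc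

theorem integral_estimate_inner_region_general
    (Q : R3 → Matrix (Fin 4) (Fin 4) ℂ)
    (Cq ρ : ℝ) (hρ : 1 < ρ)
    (hQ : ∀ x, ∀ j k, ‖Q x j k‖ ≤ Cq * jb x ^ (-ρ))
    (f : R3 → C4)
    (Cf : ℝ) (hf_bd : ∀ x, ‖f x‖ ≤ Cf * jb x ^ (-(2:ℝ))) :
    ∃ C > 0, ∀ R₀ : ℝ, 1 ≤ R₀ → ∀ r : ℝ, 2 * R₀ ≤ r → ∀ ω : R3, ‖ω‖ = 1 →
      ‖∫ y in {y : R3 | ‖y‖ ≤ R₀},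
          mulVec4 (alphaDot (ω - (‖ω - r⁻¹ • y‖ ^ 3)⁻¹ • (ω - r⁻¹ • y)))
            (mulVec4 (Q y) (f y))‖ ≤ C * R₀ * r⁻¹ := by
  have hCq : 0 ≤ Cq := by simpa [jb_zero] using (norm_nonneg _).trans (hQ 0 0 0)
  have hCf : 0 ≤ Cf := by simpa [jb_zero] using (norm_nonneg _).trans (hf_bd 0)
  set K := ∫ y : R3, jb y ^ (-(ρ + 2))
  have hK : 0 ≤ K := integral_nonneg fun y => jb_rpow_nonneg y _
  refine ⟨15360 * Cq * Cf * K + 1, by positivity, fun R₀ hR₀ r hR₀r ω hω => ?_⟩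
  have hr : 0 < r := by linarith
  calc _ ≤ 15360 * Cq * Cf * (R₀ * r⁻¹) * K := by
        refine norm_setIntegral_le_mul_integral_jb_rpow
          (isClosed_le continuous_norm continuous_const).measurableSet (by linarith) (by positivity)
          fun y hy => ?_
        calc _ ≤ 16 * (3 * (20 * (R₀ * r⁻¹))) * (16 * Cq * Cf * jb y ^ (-(ρ + 2))) :=
              (norm_mulVec4_le _ _ (norm_alphaDot_apply_le _)).trans <| by
                gcongr
                exacts [norm_sub_inv_norm_pow_three_smul_inv_smul_le hω hy hr hR₀r,
                  norm_mulVec4_le_mul_jb_rpow (hQ y) (hf_bd y)]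
          _ = _ := by ring
    _ ≤ (15360 * Cq * Cf * K + 1) * R₀ * r⁻¹ := by
        have : 0 ≤ R₀ * r⁻¹ := by positivity
        nlinarith

/-- Estimate (2.15) of Saitō–Umeda: the contribution `I_r(ω)` of the region
`{|y| ≤ R₀}` is bounded by `C R₀ r⁻¹`. -/
theorem integral_estimate_inner_region
    (Q : R3 → Matrix (Fin 4) (Fin 4) ℂ) (hQmeas : ∀ j k, Measurable (fun x => Q x j k))
    (Cq ρ : ℝ) (hCq : 0 < Cq) (hρ : 1 < ρ)
    (hQ : ∀ x, ∀ j k, ‖Q x j k‖ ≤ Cq * jb x ^ (-ρ))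
    (f : R3 → C4) (hf_meas : StronglyMeasurable f)
    (Cf : ℝ) (hf_bd : ∀ x, ‖f x‖ ≤ Cf * jb x ^ (-(2:ℝ))) :
    ∃ C > 0, ∀ R₀ : ℝ, 1 ≤ R₀ → ∀ r : ℝ, 2 * R₀ ≤ r → ∀ ω : R3, ‖ω‖ = 1 →
      ‖∫ y in {y : R3 | ‖y‖ ≤ R₀},
          mulVec4 (alphaDot (ω - (‖ω - r⁻¹ • y‖ ^ 3)⁻¹ • (ω - r⁻¹ • y)))
            (mulVec4 (Q y) (f y))‖ ≤ C * R₀ * r⁻¹ :=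
  integral_estimate_inner_region_general Q Cq ρ hρ hQ f Cf hf_bd
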